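/- arXiv:math/0401114 — 2 statements merged into one kernel-verified Lean document; each statement's English description precedes it below -/
import Mathlib

section
/- Let ν be a centered probability measure on ℝ (finite first moment and mean 0) with ∫ x² dν(x) < ∞. Then ∫_ℝ x² dν(x) = ∫_ℝ ( −|x| − Uν(x) ) dx, where the integrand −|x| − Uν(x) = ∫_ℝ |x−y| dν(y) − |x| is nonnegative. -/
open MeasureTheory
open scoped NNReal ENNReal

noncomputable section

/-- The one-dimensional potential `Uμ(x) = -∫ |x - y| dμ(y)` of a measure `μ` on `ℝ`. -/
def potentialU (μ : Measure ℝ) (x : ℝ) : ℝ := -∫ y, |x - y| ∂μ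

lemma aux_pos (y : ℝ) : ∫⁻ x in Set.Ioi (0:ℝ), ENNReal.ofReal (2 * max (y - x) 0) = ENNReal.ofReal (max y 0 ^ 2) := by
  rcases le_or_gt y 0 with hy | hy
  · have h0 : ∀ x ∈ Set.Ioi (0:ℝ), ENNReal.ofReal (2 * max (y - x) 0) = 0 := by
      intro x hx
      have : y - x ≤ 0 := by simp at hx; linarith
      simp [max_eq_right this]
    rw [setLIntegral_congr_fun measurableSet_Ioi h0]
    simp [max_eq_right hy]
  · rw [← Set.Ioc_union_Ioi_eq_Ioi hy.le,
      lintegral_union measurableSet_Ioi (Set.Ioc_disjoint_Ioi le_rfl)]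
    have h0 : ∀ x ∈ Set.Ioi y, ENNReal.ofReal (2 * max (y - x) 0) = 0 := by
      intro x hx
      have : y - x ≤ 0 := by simp at hx; linarith
      simp [max_eq_right this]
    rw [setLIntegral_congr_fun measurableSet_Ioi h0, lintegral_zero, add_zero]
    have h1 : ∀ x ∈ Set.Ioc (0:ℝ) y, ENNReal.ofReal (2 * max (y - x) 0) = ENNReal.ofReal (2 * (y - x)) := by
      intro x hx
      have : 0 ≤ y - x := by have := hx.2; linarith
      rw [max_eq_left this]
    rw [setLIntegral_congr_fun measurableSet_Ioc h1,
      ← ofReal_integral_eq_lintegral_ofReal]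
    · congr 1
      rw [← intervalIntegral.integral_of_le hy.le]
      have key : ∫ x in (0:ℝ)..y, 2 * (y - x) = y ^ 2 := by
        have h : (fun x => 2*(y-x)) = fun x:ℝ => 2*y - (2:ℝ) • x := by funext x; simp; ring
        rw [h, intervalIntegral.integral_sub intervalIntegrable_const
          (by exact (continuous_const.mul continuous_id).intervalIntegrable 0 y),
          intervalIntegral.integral_smul]
        simp [integral_id]
        ring
      rw [key, max_eq_left hy.le]
    · apply (ContinuousOn.integrableOn_compact isCompact_Icc (by fun_prop)).mono_set
        Set.Ioc_subset_Icc_self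
    · filter_upwards [self_mem_ae_restrict measurableSet_Ioc] with x hx
      simp only [Pi.zero_apply]; nlinarith [hx.1, hx.2]

lemma aux_neg (y : ℝ) : ∫⁻ x in Set.Iio (0:ℝ), ENNReal.ofReal (2 * max (x - y) 0) = ENNReal.ofReal (max (-y) 0 ^ 2) := by
  have hemb : MeasurableEmbedding (fun x : ℝ => -x) :=
    (Homeomorph.neg ℝ).measurableEmbedding
  have hmp : MeasurePreserving (fun x : ℝ => -x) volume volume :=
    Measure.measurePreserving_neg volume
  have key := hmp.setLIntegral_comp_preimage_emb hemb
    (fun x => ENNReal.ofReal (2 * max (x - y) 0)) (Set.Iio 0)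
  have hpre : (fun x : ℝ => -x) ⁻¹' Set.Iio 0 = Set.Ioi 0 := by
    ext x; simp
  rw [hpre] at key
  rw [← key]
  have : ∀ x : ℝ, ENNReal.ofReal (2 * max (-x - y) 0) = ENNReal.ofReal (2 * max ((-y) - x) 0) := by
    intro x; ring_nf
  simp only [this]
  exact aux_pos (-y)


private noncomputable def Gfun : ℝ → ℝ → ℝ≥0∞ := fun x y =>
  ENNReal.ofReal (if 0 < x then 2 * max (y - x) 0 else 2 * max (x - y) 0)

lemma Gfun_meas : Measurable (Function.uncurry Gfun) := by
  apply Measurable.ennreal_ofReal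
  exact Measurable.ite (measurableSet_lt measurable_const measurable_fst)
    (by fun_prop) (by fun_prop)

lemma Gfun_inner (y : ℝ) : ∫⁻ x, Gfun x y = ENNReal.ofReal (y ^ 2) := by
  rw [← lintegral_add_compl (fun x => Gfun x y) (measurableSet_Iio (a := (0:ℝ)))]
  have hcompl : (Set.Iio (0:ℝ))ᶜ = Set.Ici 0 := by ext x; simp
  rw [hcompl, ← Measure.restrict_congr_set Ioi_ae_eq_Ici]
  have h1 : ∫⁻ x in Set.Iio (0:ℝ), Gfun x y
      = ∫⁻ x in Set.Iio (0:ℝ), ENNReal.ofReal (2 * max (x - y) 0) := by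
    apply setLIntegral_congr_fun measurableSet_Iio
    intro x hx
    show Gfun x y = _
    rw [Gfun, if_neg (not_lt.mpr (le_of_lt (Set.mem_Iio.mp hx)))]
  have h2 : ∫⁻ x in Set.Ioi (0:ℝ), Gfun x y
      = ∫⁻ x in Set.Ioi (0:ℝ), ENNReal.ofReal (2 * max (y - x) 0) := by
    apply setLIntegral_congr_fun measurableSet_Ioi
    intro x hx
    show Gfun x y = _
    rw [Gfun, if_pos (Set.mem_Ioi.mp hx)]
  rw [h1, h2, aux_neg y, aux_pos y, ← ENNReal.ofReal_add (by positivity) (by positivity)]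
  congr 1
  rcases le_total y 0 with h | h
  · rw [max_eq_left (by linarith), max_eq_right h]; ring
  · rw [max_eq_right (by linarith), max_eq_left h]; ring


/-- For a centered probability measure `ν` on `ℝ` with finite second moment, the second
moment equals the (Lebesgue) integral of the nonnegative function `-|x| - Uν(x)`. -/
theorem second_moment_eq_integral_potential_gap
    (ν : Measure ℝ) [IsProbabilityMeasure ν]
    (hνint : Integrable (fun x => x) ν) (hνmean : (∫ x, x ∂ν) = 0)
    (hν2 : Integrable (fun x => x ^ 2) ν) :
    (∀ x : ℝ, 0 ≤ -|x| - potentialU ν x) ∧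
    (∫ x, x ^ 2 ∂ν) = ∫ x : ℝ, (-|x| - potentialU ν x) := by
  have habs : ∀ x : ℝ, Integrable (fun y => |x - y|) ν :=
    fun x => ((integrable_const x).sub hνint).abs
  have part1 : ∀ x : ℝ, 0 ≤ -|x| - potentialU ν x := by
    intro x
    have hmx : ∫ y, (x - y) ∂ν = x := by
      rw [integral_sub (integrable_const x) hνint, hνmean, integral_const]
      simp
    have h1 : |x| ≤ ∫ y, |x - y| ∂ν := by
      calc |x| = |∫ y, (x - y) ∂ν| := by rw [hmx]
        _ ≤ ∫ y, |x - y| ∂ν := by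
            simpa [Real.norm_eq_abs] using norm_integral_le_integral_norm (fun y => x - y) (μ := ν)
    simp only [potentialU]
    linarith
  refine ⟨part1, ?_⟩
  -- pointwise identity for x ≠ 0
  have hfx : ∀ x : ℝ, x ≠ 0 →
      ENNReal.ofReal (-|x| - potentialU ν x) = ∫⁻ y, Gfun x y ∂ν := by
    intro x hx
    rcases hx.lt_or_gt with hneg | hpos
    · have heq : ∀ y : ℝ, |x - y| + (x - y) = 2 * max (x - y) 0 := by
        intro y; rcases le_total y x with h | h
        · rw [abs_of_nonneg (by linarith), max_eq_left (by linarith)]; ring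
        · rw [abs_of_nonpos (by linarith), max_eq_right (by linarith)]; ring
      have hInt : Integrable (fun y => |x - y| + (x - y)) ν :=
        (habs x).add ((integrable_const x).sub hνint)
      have hval : -|x| - potentialU ν x = ∫ y, (|x - y| + (x - y)) ∂ν := by
        have e1 : ∫ y, (|x - y| + (x - y)) ∂ν
            = (∫ y, |x - y| ∂ν) + ∫ y, (x - y) ∂ν :=
          integral_add (habs x) ((integrable_const x).sub hνint)
        have e2 : ∫ y, (x - y) ∂ν = x := by
          rw [integral_sub (integrable_const x) hνint, hνmean, integral_const]; simp
        rw [e1, e2, potentialU, abs_of_neg hneg]; ring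
      rw [hval, ofReal_integral_eq_lintegral_ofReal hInt
        (Filter.Eventually.of_forall fun y => by
          simp only [Pi.zero_apply, heq y]; positivity)]
      apply lintegral_congr
      intro y
      rw [heq y, Gfun, if_neg (not_lt.mpr hneg.le)]
    · have heq : ∀ y : ℝ, |x - y| + (y - x) = 2 * max (y - x) 0 := by
        intro y; rcases le_total y x with h | h
        · rw [abs_of_nonneg (by linarith), max_eq_right (by linarith)]; ring
        · rw [abs_of_nonpos (by linarith), max_eq_left (by linarith)]; ring
      have hInt : Integrable (fun y => |x - y| + (y - x)) ν :=
        (habs x).add (hνint.sub (integrable_const x))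
      have hval : -|x| - potentialU ν x = ∫ y, (|x - y| + (y - x)) ∂ν := by
        have e1 : ∫ y, (|x - y| + (y - x)) ∂ν
            = (∫ y, |x - y| ∂ν) + ∫ y, (y - x) ∂ν :=
          integral_add (habs x) (hνint.sub (integrable_const x))
        have e2 : ∫ y, (y - x) ∂ν = -x := by
          rw [integral_sub hνint (integrable_const x), hνmean, integral_const]; simp
        rw [e1, e2, potentialU, abs_of_pos hpos]; ring
      rw [hval, ofReal_integral_eq_lintegral_ofReal hInt
        (Filter.Eventually.of_forall fun y => by
          simp only [Pi.zero_apply, heq y]; positivity)]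
      apply lintegral_congr
      intro y
      rw [heq y, Gfun, if_pos hpos]
  -- measurability of the gap function
  have hmeasf : AEStronglyMeasurable (fun x : ℝ => -|x| - potentialU ν x) volume := by
    have hsm : StronglyMeasurable (fun x : ℝ => ∫ y, |x - y| ∂ν) := by
      have hc : Continuous (fun p : ℝ × ℝ => |p.1 - p.2|) := by fun_prop
      exact hc.stronglyMeasurable.integral_prod_right'
    have : (fun x : ℝ => -|x| - potentialU ν x)
        = fun x => (∫ y, |x - y| ∂ν) - |x| := by
      funext x; simp [potentialU]; ring
    rw [this]
    exact (hsm.sub continuous_abs.stronglyMeasurable).aestronglyMeasurable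
  rw [integral_eq_lintegral_of_nonneg_ae (Filter.Eventually.of_forall part1) hmeasf]
  have h0 : ∀ᵐ x : ℝ ∂volume, x ≠ 0 := by
    rw [ae_iff]
    convert Real.volume_singleton (a := 0) using 2
    ext x; simp
  have hcongr : ∫⁻ x : ℝ, ENNReal.ofReal (-|x| - potentialU ν x)
      = ∫⁻ x : ℝ, ∫⁻ y, Gfun x y ∂ν := by
    apply lintegral_congr_ae
    filter_upwards [h0] with x hx
    exact hfx x hx
  rw [hcongr, lintegral_lintegral_swap Gfun_meas.aemeasurable]
  simp only [Gfun_inner]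
  rw [← ofReal_integral_eq_lintegral_ofReal hν2
    (Filter.Eventually.of_forall fun y => by simp only [Pi.zero_apply]; positivity),
    ENNReal.toReal_ofReal (integral_nonneg fun y => by positivity)]


end
end

section
/- Let m ∈ ℝ, b ∈ ℝ, and let μ and ν be probability measures on ℝ, each with finite first moment and mean m. Then Uν(x) = Uμ(x) for all x ∈ [b, ∞) if and only if μ and ν coincide on all Borel subsets of (b, ∞). -/
open MeasureTheory
open scoped NNReal ENNReal

noncomputable section

namespace PotentialAux

lemma abs_eq_aux (x y : ℝ) : |x - y| = (x - y) + 2 * max (y - x) 0 := by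
  rcases le_total y x with h | h
  · rw [abs_of_nonneg (by linarith), max_eq_right (by linarith)]; ring
  · rw [abs_of_nonpos (by linarith), max_eq_left (by linarith)]; ring

lemma max_diff_nonneg (a ε : ℝ) (hε : 0 ≤ ε) :
    0 ≤ max a 0 - max (a - ε) 0 := by
  have : max (a - ε) 0 ≤ max a 0 := max_le_max (by linarith) le_rfl
  linarith

lemma max_diff_le (a ε : ℝ) (hε : 0 ≤ ε) :
    max a 0 - max (a - ε) 0 ≤ ε := by
  rcases le_total a 0 with h | h
  · rw [max_eq_right h, max_eq_right (by linarith)]; linarith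
  · rw [max_eq_left h]
    have : a - ε ≤ max (a - ε) 0 := le_max_left _ _
    linarith

variable {μ : Measure ℝ} [IsProbabilityMeasure μ]

lemma int_max (hμ : Integrable (fun x => x) μ) (x : ℝ) :
    Integrable (fun y => max (y - x) 0) μ := by
  have h : Integrable (fun y : ℝ => |y| + |x|) μ := hμ.abs.add (integrable_const _)
  refine h.mono' ?_ ?_
  · exact ((continuous_id.sub continuous_const).max continuous_const).aestronglyMeasurable
  · filter_upwards with y
    rw [Real.norm_eq_abs, abs_of_nonneg (le_max_right _ _)]
    rcases le_total (y - x) 0 with h' | h'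
    · rw [max_eq_right h']; positivity
    · rw [max_eq_left h']
      have h1 : y ≤ |y| := le_abs_self y
      have h2 : -|x| ≤ x := neg_abs_le x
      linarith

lemma int_abs (hμ : Integrable (fun x => x) μ) (x : ℝ) :
    Integrable (fun y => |x - y|) μ := by
  have h : Integrable (fun y : ℝ => |x| + |y|) μ := (integrable_const _).add hμ.abs
  refine h.mono' ?_ ?_
  · exact (continuous_const.sub continuous_id).abs.aestronglyMeasurable
  · filter_upwards with y
    rw [Real.norm_eq_abs, abs_abs]
    calc |x - y| = |x + (-y)| := by ring_nf
      _ ≤ |x| + |(-y)| := abs_add_le _ _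
      _ = |x| + |y| := by rw [abs_neg]

lemma potential_formula (hμ : Integrable (fun x => x) μ) (x : ℝ) :
    potentialU μ x = -((x - ∫ y, y ∂μ) + 2 * ∫ y, max (y - x) 0 ∂μ) := by
  unfold potentialU
  congr 1
  have h1 : Integrable (fun y => x - y) μ := (integrable_const x).sub hμ
  calc ∫ y, |x - y| ∂μ = ∫ y, ((x - y) + 2 * max (y - x) 0) ∂μ := by
        simp_rw [abs_eq_aux]
    _ = ∫ y, (x - y) ∂μ + 2 * ∫ y, max (y - x) 0 ∂μ := by
        rw [integral_add h1 ((int_max hμ x).const_mul 2), integral_const_mul]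
    _ = (x - ∫ y, y ∂μ) + 2 * ∫ y, max (y - x) 0 ∂μ := by
        rw [integral_sub (integrable_const x) hμ, integral_const]
        simp

/-- Difference quotients of `F(x) = ∫ max (y-x) 0 dμ` converge to the tail measure. -/
lemma tendsto_quot (hμ : Integrable (fun x => x) μ) (x : ℝ) :
    Filter.Tendsto
      (fun n : ℕ => ((n : ℝ) + 1) *
        ((∫ y, max (y - x) 0 ∂μ) - ∫ y, max (y - (x + ((n : ℝ) + 1)⁻¹)) 0 ∂μ))
      Filter.atTop (nhds ((μ (Set.Ioi x)).toReal)) := by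
  have key : ∀ n : ℕ, ((n : ℝ) + 1) *
      ((∫ y, max (y - x) 0 ∂μ) - ∫ y, max (y - (x + ((n : ℝ) + 1)⁻¹)) 0 ∂μ)
      = ∫ y, ((n : ℝ) + 1) * (max (y - x) 0 - max (y - (x + ((n : ℝ) + 1)⁻¹)) 0) ∂μ := by
    intro n
    rw [← integral_sub (int_max hμ x) (int_max hμ _), ← integral_const_mul]
  have lim : ((μ (Set.Ioi x)).toReal : ℝ)
      = ∫ y, Set.indicator (Set.Ioi x) (fun _ => (1 : ℝ)) y ∂μ := by
    rw [integral_indicator measurableSet_Ioi]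
    simp
    rfl
  rw [lim]
  have hmeas : ∀ n : ℕ, AEStronglyMeasurable
      (fun y => ((n : ℝ) + 1) * (max (y - x) 0 - max (y - (x + ((n : ℝ) + 1)⁻¹)) 0)) μ := by
    intro n
    apply Continuous.aestronglyMeasurable
    exact continuous_const.mul
      (((continuous_id.sub continuous_const).max continuous_const).sub
        ((continuous_id.sub continuous_const).max continuous_const))
  have hpos : ∀ n : ℕ, (0:ℝ) < ((n : ℝ) + 1)⁻¹ := by
    intro n; positivity
  have hbound : ∀ n : ℕ, ∀ᵐ y ∂μ,
      ‖((n : ℝ) + 1) * (max (y - x) 0 - max (y - (x + ((n : ℝ) + 1)⁻¹)) 0)‖ ≤ (1 : ℝ) := by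
    intro n
    filter_upwards with y
    have hε := (hpos n).le
    have h1 : y - (x + ((n : ℝ) + 1)⁻¹) = (y - x) - ((n : ℝ) + 1)⁻¹ := by ring
    rw [h1, Real.norm_eq_abs, abs_mul, abs_of_nonneg (by positivity : (0:ℝ) ≤ (n:ℝ)+1),
      abs_of_nonneg (max_diff_nonneg _ _ hε)]
    have h2 := max_diff_le (y - x) (((n : ℝ) + 1)⁻¹) hε
    calc ((n : ℝ) + 1) * (max (y - x) 0 - max (y - x - ((n : ℝ) + 1)⁻¹) 0)
        ≤ ((n : ℝ) + 1) * ((n : ℝ) + 1)⁻¹ :=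
          mul_le_mul_of_nonneg_left h2 (by positivity)
      _ = 1 := mul_inv_cancel₀ (by positivity)
  have hlim : ∀ᵐ y ∂μ, Filter.Tendsto
      (fun n : ℕ => ((n : ℝ) + 1) * (max (y - x) 0 - max (y - (x + ((n : ℝ) + 1)⁻¹)) 0))
      Filter.atTop (nhds (Set.indicator (Set.Ioi x) (fun _ => (1 : ℝ)) y)) := by
    filter_upwards with y
    rcases le_or_gt y x with h | h
    · have : Set.indicator (Set.Ioi x) (fun _ => (1 : ℝ)) y = 0 := by
        apply Set.indicator_of_notMem
        simpa using h
      rw [this]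
      have : ∀ n : ℕ,
          ((n : ℝ) + 1) * (max (y - x) 0 - max (y - (x + ((n : ℝ) + 1)⁻¹)) 0) = 0 := by
        intro n
        rw [max_eq_right (by linarith), max_eq_right (by linarith [(hpos n).le])]
        ring
      simp only [this]
      exact tendsto_const_nhds
    · have hind : Set.indicator (Set.Ioi x) (fun _ => (1 : ℝ)) y = 1 :=
        Set.indicator_of_mem h (fun _ => (1 : ℝ))
      rw [hind]
      have htend : Filter.Tendsto (fun n : ℕ => ((n : ℝ) + 1)⁻¹) Filter.atTop (nhds 0) := by
        apply Filter.Tendsto.comp tendsto_inv_atTop_zero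
        exact Filter.tendsto_atTop_add_const_right _ _ tendsto_natCast_atTop_atTop
      have hev : ∀ᶠ n : ℕ in Filter.atTop, ((n : ℝ) + 1)⁻¹ < y - x :=
        htend.eventually_lt_const (by linarith)
      apply Filter.Tendsto.congr' ?_ tendsto_const_nhds
      filter_upwards [hev] with n hn
      rw [max_eq_left (by linarith), max_eq_left (by linarith [hpos n])]
      have h3 : (y - x) - (y - (x + ((n : ℝ) + 1)⁻¹)) = ((n : ℝ) + 1)⁻¹ := by ring
      rw [h3]
      exact (mul_inv_cancel₀ (by positivity : ((n : ℝ) + 1) ≠ 0)).symm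
  simp_rw [key]
  exact tendsto_integral_of_dominated_convergence _ hmeas (integrable_const 1) hbound hlim

end PotentialAux

open PotentialAux

/-- For probability measures `μ, ν` on `ℝ` with finite first moments and the same mean
`m₀`, the potentials `Uν` and `Uμ` coincide on `[b, ∞)` if and only if `μ` and `ν`
coincide on all Borel subsets of `(b, ∞)`. -/
theorem potential_eq_on_Ici_iff_measures_eq_on_Ioi
    (m₀ b : ℝ) (μ ν : Measure ℝ) [IsProbabilityMeasure μ] [IsProbabilityMeasure ν]
    (hμint : Integrable (fun x => x) μ) (hνint : Integrable (fun x => x) ν)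
    (hμmean : (∫ x, x ∂μ) = m₀) (hνmean : (∫ x, x ∂ν) = m₀) :
    (∀ x ∈ Set.Ici b, potentialU ν x = potentialU μ x) ↔
      (∀ s : Set ℝ, MeasurableSet s → s ⊆ Set.Ioi b → μ s = ν s) := by
  constructor
  · intro hpot
    -- From potentials to equality of F on [b, ∞)
    have hF : ∀ x ∈ Set.Ici b, (∫ y, max (y - x) 0 ∂μ) = ∫ y, max (y - x) 0 ∂ν := by
      intro x hx
      have h := hpot x hx
      rw [potential_formula hνint x, potential_formula hμint x, hμmean, hνmean] at h
      linarith
    -- tails agree on [b, ∞)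
    have htail : ∀ x ∈ Set.Ici b, μ (Set.Ioi x) = ν (Set.Ioi x) := by
      intro x hx
      have h1 := tendsto_quot hμint x
      have h2 := tendsto_quot hνint x
      have heq : (fun n : ℕ => ((n : ℝ) + 1) *
          ((∫ y, max (y - x) 0 ∂μ) - ∫ y, max (y - (x + ((n : ℝ) + 1)⁻¹)) 0 ∂μ))
          = (fun n : ℕ => ((n : ℝ) + 1) *
          ((∫ y, max (y - x) 0 ∂ν) - ∫ y, max (y - (x + ((n : ℝ) + 1)⁻¹)) 0 ∂ν)) := by
        funext n
        have hmem : x + ((n : ℝ) + 1)⁻¹ ∈ Set.Ici b := by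
          have : (0:ℝ) < ((n : ℝ) + 1)⁻¹ := by positivity
          simp only [Set.mem_Ici] at hx ⊢
          linarith
        rw [hF x hx, hF _ hmem]
      rw [heq] at h1
      have := tendsto_nhds_unique h1 h2
      exact (ENNReal.toReal_eq_toReal_iff' (measure_ne_top μ _) (measure_ne_top ν _)).mp this
    -- extend to all Borel subsets of (b, ∞)
    have hA : (inferInstance : MeasurableSpace ℝ)
        = MeasurableSpace.generateFrom (Set.range Set.Ioi) :=
      BorelSpace.measurable_eq.trans (borel_eq_generateFrom_Ioi ℝ)
    have hrestrict : μ.restrict (Set.Ioi b) = ν.restrict (Set.Ioi b) := by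
      refine ext_of_generate_finite _ hA isPiSystem_Ioi ?_ ?_
      · rintro t ⟨a, rfl⟩
        rw [Measure.restrict_apply measurableSet_Ioi,
          Measure.restrict_apply measurableSet_Ioi, Set.Ioi_inter_Ioi]
        exact htail _ (le_max_right a b)
      · rw [Measure.restrict_apply_univ, Measure.restrict_apply_univ]
        exact htail b Set.self_mem_Ici
    intro s hs hsub
    have h1 : μ.restrict (Set.Ioi b) s = μ s := by
      rw [Measure.restrict_apply hs, Set.inter_eq_self_of_subset_left hsub]
    have h2 : ν.restrict (Set.Ioi b) s = ν s := by
      rw [Measure.restrict_apply hs, Set.inter_eq_self_of_subset_left hsub]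
    rw [← h1, ← h2, hrestrict]
  · intro hμν x hx
    have hrestrict : μ.restrict (Set.Ioi b) = ν.restrict (Set.Ioi b) := by
      ext s hs
      rw [Measure.restrict_apply hs, Measure.restrict_apply hs]
      exact hμν _ (hs.inter measurableSet_Ioi) Set.inter_subset_right
    have hFx : (∫ y, max (y - x) 0 ∂μ) = ∫ y, max (y - x) 0 ∂ν := by
      have hind : ∀ (ρ : Measure ℝ),
          (∫ y, max (y - x) 0 ∂ρ)
            = ∫ y, Set.indicator (Set.Ioi b) (fun y => max (y - x) 0) y ∂ρ := by
        intro ρ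
        congr 1
        funext y
        rw [Set.indicator_apply]
        split_ifs with hy
        · rfl
        · simp only [Set.mem_Ioi, not_lt] at hy
          simp only [Set.mem_Ici] at hx
          rw [max_eq_right (by linarith)]
      rw [hind μ, hind ν, integral_indicator measurableSet_Ioi,
        integral_indicator measurableSet_Ioi, hrestrict]
    rw [potential_formula hμint x, potential_formula hνint x, hμmean, hνmean, hFx]

end
end
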